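/- Let n > 0, let π be a vector of probabilities in (0,1) for the interior states, and consider the nearest-neighbour Markov chain on {−n,…,n} with reflecting barriers at −n and n and transition probabilities π, started at state 0. Let T_{0,n} and T_{0,−n} be the hitting times of n and of −n, and let E[T_{n,0}] and E[T_{−n,0}] be the expected hitting times of 0 from the two barriers. Then E[max(T_{0,n}, T_{0,−n})] ≥ min( E[T_{n,0}], E[T_{−n,0}] ). -/

import Mathlib

/-!
Split the paths of the chain started at `0` according to the first positive time `k` at which
they enter `{n, -n}` and the barrier `x = ±n` entered. Since the chain moves by steps of size
one, after time `k` it passes through `0` before it reaches `-x`, so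
`max (T_{0,n}, T_{0,-n}) ≥ T_{0,-x}` is at least the hitting time of `0` by the path shifted by
`k`. The first-entry event depends only on the path up to time `k`, so by the Markov property
at the fixed time `k` the shifted path is, on that event, distributed as the chain started at
`x`: the event contributes at least its probability times `E[T_{x,0}]`. Paths that never reach
a barrier have `T_{0,n} = ∞`.
-/

open MeasureTheory ENNReal Finset

noncomputable section

/-- `μ` is the law of the time-homogeneous Markov chain on the state space `S` with
one-step transition probabilities `p` and initial state `s`, described through the
probabilities of all cylinder events. -/
def IsMarkovChain {S : Type*} [MeasurableSpace S] [DecidableEq S] (p : S → S → ℝ≥0∞) (s : S)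
    (μ : MeasureTheory.Measure (ℕ → S)) : Prop :=
  MeasureTheory.IsProbabilityMeasure μ ∧
    ∀ (T : ℕ) (path : ℕ → S),
      μ {ω | ∀ t ≤ T, ω t = path t} =
        (if path 0 = s then 1 else 0) * ∏ t ∈ Finset.range T, p (path t) (path (t + 1))

/-- The first *positive* hitting time `min {t > 0 : ω t = j}` of the state `j`
along the trajectory `ω`, viewed in `ℝ≥0∞` (it is `∞` if `j` is never hit). -/
def hitTime {S : Type*} (j : S) (ω : ℕ → S) : ℝ≥0∞ :=
  sInf ((fun t : ℕ => (t : ℝ≥0∞)) '' {t | 0 < t ∧ ω t = j})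

/-- The expected hitting time `E[T_{·,j}]` of state `j` under the trajectory law `μ`
(possibly `+∞`). -/
def expHit {S : Type*} [MeasurableSpace S] (μ : MeasureTheory.Measure (ℕ → S)) (j : S) :
    ℝ≥0∞ :=
  ∫⁻ ω, hitTime j ω ∂μ

/-- Transition probabilities of the nearest-neighbour Markov chain on `{a, …, b} ⊆ ℤ`
with reflecting barriers at `a` and `b`: from `a` go to `a+1`, from `b` go to `b-1`,
and from an interior state `i` go to `i+1` with probability `π i` and to `i-1` with
probability `1 - π i`. -/
def nnTrans (a b : ℤ) (π : ℤ → ℝ≥0∞) : ℤ → ℤ → ℝ≥0∞ := fun i j =>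
  if i = a then (if j = a + 1 then 1 else 0)
  else if i = b then (if j = b - 1 then 1 else 0)
  else if a < i ∧ i < b then
    (if j = i + 1 then π i else if j = i - 1 then 1 - π i else 0)
  else 0

theorem le_lintegral_of_mul_measure_le_setLIntegral {α ι : Type*} [MeasurableSpace α]
    [Countable ι] {μ : Measure α} [IsProbabilityMeasure μ] {A : ι → Set α}
    (hA : ∀ i, MeasurableSet (A i)) (hd : Pairwise (Function.onFun Disjoint A))
    {f : α → ℝ≥0∞} {c : ℝ≥0∞} (hf : ∀ i, c * μ (A i) ≤ ∫⁻ a in A i, f a ∂μ)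
    (htop : ∀ a ∉ ⋃ i, A i, f a = ⊤) : c ≤ ∫⁻ a, f a ∂μ := by
  have hU : MeasurableSet (⋃ i, A i) := .iUnion hA
  have hout : c * μ (⋃ i, A i)ᶜ ≤ ∫⁻ a in (⋃ i, A i)ᶜ, f a ∂μ := by
    rw [setLIntegral_congr_fun hU.compl htop, setLIntegral_const]
    exact mul_le_mul_left le_top _
  calc c = c * (μ (⋃ i, A i) + μ (⋃ i, A i)ᶜ) := by
        rw [measure_add_measure_compl hU, measure_univ, mul_one]
    _ = ∑' i, c * μ (A i) + c * μ (⋃ i, A i)ᶜ := by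
        rw [mul_add, measure_iUnion hd hA, ENNReal.tsum_mul_left]
    _ ≤ ∑' i, ∫⁻ a in A i, f a ∂μ + ∫⁻ a in (⋃ i, A i)ᶜ, f a ∂μ :=
        add_le_add (ENNReal.tsum_le_tsum hf) hout
    _ = ∫⁻ a, f a ∂μ := by
        rw [← lintegral_iUnion hA hd, lintegral_add_compl _ hU]

section PrefixCylinders

variable {S : Type*}

def prefixCyl (k : ℕ) (ω : ℕ → S) : Set (ℕ → S) := {ω' | ∀ t ≤ k, ω' t = ω t}

def shift (k : ℕ) (ω : ℕ → S) : ℕ → S := fun t => ω (k + t)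

theorem prefixCyl_eq_of_mem {k : ℕ} {ω ω' : ℕ → S} (h : ω' ∈ prefixCyl k ω) :
    prefixCyl k ω' = prefixCyl k ω := by
  ext ζ
  exact forall₂_congr fun t ht => by rw [h t ht]

theorem prefixCyl_inter_prefixCyl {k l : ℕ} {ω ω' η : ℕ → S}
    (hη : η ∈ prefixCyl k ω ∩ prefixCyl l ω') :
    prefixCyl k ω ∩ prefixCyl l ω' = prefixCyl (max k l) η := by
  rw [← prefixCyl_eq_of_mem hη.1, ← prefixCyl_eq_of_mem hη.2]
  ext ζ
  exact ⟨fun h t ht => (le_max_iff.1 ht).elim (h.1 t) (h.2 t),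
    fun h => ⟨fun t ht => h t (le_max_of_le_left ht), fun t ht => h t (le_max_of_le_right ht)⟩⟩

theorem isPiSystem_prefixCyl :
    IsPiSystem (Set.range fun q : ℕ × (ℕ → S) => prefixCyl q.1 q.2) := by
  rintro _ ⟨⟨k, ω⟩, rfl⟩ _ ⟨⟨l, ω'⟩, rfl⟩ ⟨η, hη⟩
  exact ⟨(max k l, η), (prefixCyl_inter_prefixCyl hη).symm⟩

theorem prefixCyl_eq_preimage_frestrictLe (k : ℕ) (ω : ℕ → S) :
    prefixCyl k ω =
      Preorder.frestrictLe (π := fun _ => S) k ⁻¹' {Preorder.frestrictLe k ω} := by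
  ext ω'
  simp [prefixCyl, funext_iff, Preorder.frestrictLe_apply]

theorem countable_image_prefixCyl [Countable S] (k : ℕ) (A : Set (ℕ → S)) :
    (prefixCyl k '' A).Countable :=
  (Set.countable_range fun v => Preorder.frestrictLe (π := fun _ => S) k ⁻¹' {v}).mono <| by
    rintro _ ⟨ω, -, rfl⟩
    exact ⟨_, (prefixCyl_eq_preimage_frestrictLe k ω).symm⟩

theorem pairwise_disjoint_image_prefixCyl (k : ℕ) (A : Set (ℕ → S)) :
    (prefixCyl k '' A).Pairwise Disjoint := by
  rintro _ ⟨ω, -, rfl⟩ _ ⟨ω', -, rfl⟩ hne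
  refine Set.disjoint_left.2 fun η h h' => hne ?_
  rw [← prefixCyl_eq_of_mem h, prefixCyl_eq_of_mem h']

theorem sUnion_image_prefixCyl {k : ℕ} {A : Set (ℕ → S)} (hA : DependsOn (· ∈ A) (Set.Iic k)) :
    ⋃₀ (prefixCyl k '' A) = A := by
  refine subset_antisymm ?_ fun ω hω => ⟨_, ⟨ω, hω, rfl⟩, fun t _ => rfl⟩
  rintro ζ ⟨_, ⟨ω, hω, rfl⟩, hζ⟩
  exact Eq.mp (hA fun t ht => (hζ t ht).symm) hω

theorem prefixCyl_inter_shift_preimage {k T : ℕ} {w path : ℕ → S} (hw : w k = path 0) :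
    prefixCyl k w ∩ shift k ⁻¹' prefixCyl T path =
      prefixCyl (k + T) (fun t => if t ≤ k then w t else path (t - k)) := by
  ext ω
  simp only [prefixCyl, shift, Set.mem_inter_iff, Set.mem_preimage, Set.mem_ofPred_eq]
  constructor
  · rintro ⟨hk, hT⟩ t ht
    split_ifs with htk
    · exact hk t htk
    · simpa [Nat.add_sub_cancel' (le_of_not_ge htk)] using hT (t - k) (by omega)
  · intro h
    refine ⟨fun t ht => by simpa [ht] using h t (by omega), fun t ht => ?_⟩
    rcases Nat.eq_zero_or_pos t with rfl | ht0
    · simpa [hw] using h k (by omega)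
    · simpa [show ¬ k + t ≤ k by omega] using h (k + t) (by omega)

variable [MeasurableSpace S]

theorem measurable_shift (k : ℕ) : Measurable (shift (S := S) k) :=
  measurable_pi_lambda _ fun _ => measurable_pi_apply _

variable [MeasurableSingletonClass S]

theorem measurableSet_prefixCyl (k : ℕ) (ω : ℕ → S) : MeasurableSet (prefixCyl k ω) := by
  rw [prefixCyl_eq_preimage_frestrictLe]
  exact Preorder.measurable_frestrictLe k (measurableSet_singleton _)

variable [Countable S]

theorem MeasurableSet.of_dependsOn_Iic {k : ℕ} {A : Set (ℕ → S)}
    (hA : DependsOn (· ∈ A) (Set.Iic k)) : MeasurableSet A :=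
  sUnion_image_prefixCyl hA ▸ .sUnion (countable_image_prefixCyl k A) fun _ ⟨ω, _, hc⟩ =>
    hc ▸ measurableSet_prefixCyl k ω

theorem measure_eq_tsum_prefixCyl (μ : Measure (ℕ → S)) {k : ℕ} {A : Set (ℕ → S)}
    (hA : DependsOn (· ∈ A) (Set.Iic k)) : μ A = ∑' c : prefixCyl k '' A, μ c := by
  conv_lhs => rw [← sUnion_image_prefixCyl hA]
  exact measure_sUnion (countable_image_prefixCyl k A) (pairwise_disjoint_image_prefixCyl k A)
    fun _ ⟨ω, _, hc⟩ => hc ▸ measurableSet_prefixCyl k ω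

theorem generateFrom_prefixCyl :
    MeasurableSpace.generateFrom (Set.range fun q : ℕ × (ℕ → S) => prefixCyl q.1 q.2) =
      MeasurableSpace.pi := by
  refine le_antisymm (MeasurableSpace.generateFrom_le ?_) ?_
  · rintro _ ⟨q, rfl⟩
    exact measurableSet_prefixCyl q.1 q.2
  · refine iSup_le fun i => MeasurableSpace.comap_le_iff_le_map.2 fun B _ => ?_
    have hB : DependsOn (· ∈ (fun ω : ℕ → S => ω i) ⁻¹' B) (Set.Iic i) :=
      fun ω ω' h => by simp only [Set.mem_preimage, h i Set.self_mem_Iic]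
    rw [MeasurableSpace.map_def, ← sUnion_image_prefixCyl hB]
    exact MeasurableSet.sUnion (countable_image_prefixCyl i _) fun _ ⟨ω, _, hc⟩ =>
      MeasurableSpace.measurableSet_generateFrom ⟨(i, ω), hc⟩

end PrefixCylinders

namespace IsMarkovChain

variable {S : Type*} [MeasurableSpace S] [DecidableEq S]
  {p : S → S → ℝ≥0∞} {s x : S} {μ ν : Measure (ℕ → S)}

theorem measure_prefixCyl (h : IsMarkovChain p s μ) (k : ℕ) (w : ℕ → S) :
    μ (prefixCyl k w) = (if w 0 = s then 1 else 0) * ∏ t ∈ range k, p (w t) (w (t + 1)) :=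
  h.2 k w

theorem measure_prefixCyl_inter_shift_preimage (h : IsMarkovChain p s μ)
    (hx : IsMarkovChain p x ν) {k T : ℕ} {w path : ℕ → S} (hw : w k = x) :
    μ (prefixCyl k w ∩ shift k ⁻¹' prefixCyl T path) =
      μ (prefixCyl k w) * ν (prefixCyl T path) := by
  by_cases hpath : path 0 = x
  · rw [prefixCyl_inter_shift_preimage (hw.trans hpath.symm), h.measure_prefixCyl,
      h.measure_prefixCyl, hx.measure_prefixCyl, if_pos hpath, one_mul, prod_range_add, ← mul_assoc]
    set g : ℕ → S := fun t => if t ≤ k then w t else path (t - k)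
    have hg : ∀ t, g (k + t) = path t := by
      rintro (_ | t)
      · simp [g, hw, hpath]
      · simp [g]
    have hfirst : ∀ t ∈ range k, p (g t) (g (t + 1)) = p (w t) (w (t + 1)) := fun t ht => by
      have ht : t + 1 ≤ k := mem_range.1 ht
      simp [g, ht, (Nat.le_succ t).trans ht]
    have hsecond : ∀ t ∈ range T, p (g (k + t)) (g (k + t + 1)) = p (path t) (path (t + 1)) :=
      fun t _ => by rw [hg, add_assoc, hg]
    rw [prod_congr rfl hfirst, prod_congr rfl hsecond, if_pos (Nat.zero_le k)]
  · have hempty : prefixCyl k w ∩ shift k ⁻¹' prefixCyl T path = ∅ := by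
      refine Set.eq_empty_of_forall_notMem fun ω hω => hpath ?_
      have h0 : ω (k + 0) = path 0 := hω.2 0 (Nat.zero_le _)
      rw [← h0, add_zero, hω.1 k le_rfl, hw]
    rw [hempty, hx.measure_prefixCyl, if_neg hpath]
    simp

variable [MeasurableSingletonClass S] [Countable S]

theorem ae_transition_ne_zero (h : IsMarkovChain p s μ) :
    ∀ᵐ ω ∂μ, ∀ t, p (ω t) (ω (t + 1)) ≠ 0 := by
  refine ae_all_iff.2 fun t => ?_
  have hdep : DependsOn (· ∈ {ω : ℕ → S | ¬ p (ω t) (ω (t + 1)) ≠ 0}) (Set.Iic (t + 1)) :=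
    fun ω ω' h => by
      simp only [Set.mem_ofPred_eq, h t (by simp), h (t + 1) Set.self_mem_Iic]
  rw [ae_iff, measure_eq_tsum_prefixCyl μ hdep]
  refine ENNReal.tsum_eq_zero.2 ?_
  rintro ⟨_, ω, hω, rfl⟩
  have hzero : p (ω t) (ω (t + 1)) = 0 := not_not.1 hω
  rw [h.measure_prefixCyl, prod_eq_zero (self_mem_range_succ t) hzero, mul_zero]

theorem map_restrict_prefixCyl_shift (h : IsMarkovChain p s μ) (hx : IsMarkovChain p x ν)
    {k : ℕ} {w : ℕ → S} (hw : w k = x) :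
    (μ.restrict (prefixCyl k w)).map (shift k) = μ (prefixCyl k w) • ν := by
  have := h.1
  have := hx.1
  refine ext_of_generate_finite _ generateFrom_prefixCyl.symm isPiSystem_prefixCyl ?_ ?_
  · rintro _ ⟨⟨T, path⟩, rfl⟩
    rw [Measure.map_apply (measurable_shift k) (measurableSet_prefixCyl T path),
      Measure.restrict_apply ((measurableSet_prefixCyl T path).preimage (measurable_shift k)),
      Set.inter_comm, Measure.smul_apply, smul_eq_mul]
    exact h.measure_prefixCyl_inter_shift_preimage hx hw
  · rw [Measure.map_apply (measurable_shift k) MeasurableSet.univ, Set.preimage_univ,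
      Measure.restrict_apply_univ, Measure.smul_apply, measure_univ, smul_eq_mul, mul_one]

theorem map_restrict_shift (h : IsMarkovChain p s μ) (hx : IsMarkovChain p x ν) {k : ℕ}
    {A : Set (ℕ → S)} (hA : DependsOn (· ∈ A) (Set.Iic k)) (hAx : ∀ ω ∈ A, ω k = x) :
    (μ.restrict A).map (shift k) = μ A • ν := by
  ext B hB
  have hB' := hB.preimage (measurable_shift k)
  rw [Measure.map_apply (measurable_shift k) hB, Measure.restrict_apply hB', Measure.smul_apply,
    smul_eq_mul, measure_eq_tsum_prefixCyl μ hA, ← ENNReal.tsum_mul_right]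
  conv_lhs => rw [← sUnion_image_prefixCyl hA, Set.sUnion_eq_biUnion, Set.inter_iUnion₂]
  rw [measure_biUnion (countable_image_prefixCyl k A)
    (fun c hc c' hc' hne => (pairwise_disjoint_image_prefixCyl k A hc hc' hne).mono
      Set.inter_subset_right Set.inter_subset_right)
    fun _ ⟨ω, _, hc⟩ => hc ▸ hB'.inter (measurableSet_prefixCyl k ω)]
  refine tsum_congr ?_
  rintro ⟨_, ω, hω, rfl⟩
  have := congrArg (· B) (h.map_restrict_prefixCyl_shift hx (hAx ω hω))
  simpa [Measure.map_apply (measurable_shift k) hB, Measure.restrict_apply hB', Set.inter_comm]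
    using this

theorem setLIntegral_comp_shift (h : IsMarkovChain p s μ) (hx : IsMarkovChain p x ν) {k : ℕ}
    {A : Set (ℕ → S)} (hA : DependsOn (· ∈ A) (Set.Iic k)) (hAx : ∀ ω ∈ A, ω k = x)
    {f : (ℕ → S) → ℝ≥0∞} (hf : Measurable f) :
    ∫⁻ ω in A, f (shift k ω) ∂μ = μ A * ∫⁻ ω, f ω ∂ν := by
  rw [← lintegral_map hf (measurable_shift k), h.map_restrict_shift hx hA hAx,
    lintegral_smul_measure, smul_eq_mul]

end IsMarkovChain

section HittingTimes

variable {S : Type*}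

theorem hitTime_le {j : S} {ω : ℕ → S} {t : ℕ} (ht : 0 < t) (hωt : ω t = j) :
    hitTime j ω ≤ t :=
  sInf_le ⟨t, ⟨ht, hωt⟩, rfl⟩

theorem hitTime_eq_top {j : S} {ω : ℕ → S} (h : ∀ t, 0 < t → ω t ≠ j) : hitTime j ω = ⊤ := by
  rw [hitTime, sInf_eq_top]
  rintro _ ⟨t, ⟨ht, hωt⟩, rfl⟩
  exact absurd hωt (h t ht)

theorem measurable_hitTime [MeasurableSpace S] [MeasurableSingletonClass S] (j : S) :
    Measurable (hitTime j) := by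
  classical
  have : hitTime j = fun ω => ⨅ t : ℕ, if 0 < t ∧ ω t = j then (t : ℝ≥0∞) else ⊤ := by
    ext ω
    simp [hitTime, sInf_image, iInf_eq_if]
  rw [this]
  refine Measurable.iInf fun t => Measurable.ite ?_ measurable_const measurable_const
  exact (MeasurableSet.const (0 < t)).inter
    ((measurableSet_singleton j).preimage (measurable_pi_apply t))

end HittingTimes

def firstEntry {S : Type*} (E : Set S) (k : ℕ) (x : S) : Set (ℕ → S) :=
  {ω | 0 < k ∧ ω k = x ∧ ∀ t, 0 < t → t < k → ω t ∉ E}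

section FirstEntry

variable {S : Type*} {E : Set S}

theorem dependsOn_mem_firstEntry (E : Set S) (k : ℕ) (x : S) :
    DependsOn (· ∈ firstEntry E k x) (Set.Iic k) := by
  intro ω ω' h
  have h' : ∀ t, t ≤ k → ω t = ω' t := h
  simp only [firstEntry, Set.mem_ofPred_eq, h' k le_rfl]
  congr! 5 with t _ htk
  rw [h' t htk.le]

theorem pairwise_disjoint_firstEntry (E : Set S) :
    Pairwise (Function.onFun Disjoint fun q : ℕ × E => firstEntry E q.1 q.2) := by
  rintro ⟨k, x, hx⟩ ⟨l, y, hy⟩ hne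
  refine Set.disjoint_left.2 fun ω ⟨hk, hωk, hbk⟩ ⟨hl, hωl, hbl⟩ => hne ?_
  obtain hkl | rfl | hlk := lt_trichotomy k l
  · exact absurd (hωk ▸ hx) (hbl k hk hkl)
  · simp only [Prod.mk.injEq, Subtype.mk.injEq, true_and]
    exact hωk.symm.trans hωl
  · exact absurd (hωl ▸ hy) (hbk l hl hlk)

theorem exists_mem_firstEntry {ω : ℕ → S} {t : ℕ} (ht : 0 < t) (hωt : ω t ∈ E) :
    ∃ q : ℕ × E, ω ∈ firstEntry E q.1 q.2 := by
  classical
  have hex : ∃ t, 0 < t ∧ ω t ∈ E := ⟨t, ht, hωt⟩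
  obtain ⟨hk, hkE⟩ := Nat.find_spec hex
  exact ⟨(Nat.find hex, ⟨_, hkE⟩), hk, rfl, fun u hu hlt hu' => Nat.find_min hex hlt ⟨hu, hu'⟩⟩

end FirstEntry

theorem exists_mem_Icc_eq_of_abs_sub_le_one {f : ℕ → ℤ} (hf : ∀ t, |f (t + 1) - f t| ≤ 1)
    {a b : ℕ} (hab : a ≤ b) {y : ℤ} (hy : y ∈ Set.uIcc (f a) (f b)) :
    ∃ c ∈ Set.Icc a b, f c = y := by
  induction b, hab using Nat.le_induction with
  | base => exact ⟨a, Set.left_mem_Icc.2 le_rfl, by simpa [eq_comm] using hy⟩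
  | succ b hab ih =>
    by_cases hy' : y ∈ Set.uIcc (f a) (f b)
    · obtain ⟨c, hc, hfc⟩ := ih hy'
      exact ⟨c, ⟨hc.1, hc.2.trans b.le_succ⟩, hfc⟩
    · refine ⟨b + 1, Set.right_mem_Icc.2 (hab.trans b.le_succ), ?_⟩
      have := hf b
      simp only [Set.mem_uIcc, abs_le] at hy hy' this
      omega

theorem hitTime_shift_le_hitTime {ω : ℕ → ℤ} (hω : ∀ t, |ω (t + 1) - ω t| ≤ 1) {k : ℕ} {y : ℤ}
    (hk : ω k ≠ 0) (hy : 0 ∈ Set.uIcc (ω k) y) (hky : ∀ t, 0 < t → t ≤ k → ω t ≠ y) :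
    hitTime 0 (shift k ω) ≤ hitTime y ω := by
  refine le_sInf ?_
  rintro _ ⟨t, ⟨ht, hωt⟩, rfl⟩
  have hkt : k < t := lt_of_not_ge fun h => hky t ht h hωt
  obtain ⟨c, ⟨hkc, hct⟩, hc⟩ := exists_mem_Icc_eq_of_abs_sub_le_one hω hkt.le (hωt ▸ hy)
  have hkc' : k < c := lt_of_le_of_ne hkc (by rintro rfl; exact hk hc)
  calc hitTime 0 (shift k ω) ≤ (c - k : ℕ) :=
        hitTime_le (by omega) (by simp [shift, Nat.add_sub_cancel' hkc, hc])
    _ ≤ t := by exact_mod_cast (by omega : c - k ≤ t)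

theorem measure_firstEntry_mul_expHit_le {p : ℤ → ℤ → ℝ≥0∞} {s x : ℤ} {μ ν : Measure (ℕ → ℤ)}
    (h : IsMarkovChain p s μ) (hx : IsMarkovChain p x ν) (hp : ∀ i j, p i j ≠ 0 → |j - i| ≤ 1)
    (hx0 : x ≠ 0) {E : Set ℤ} (hE : -x ∈ E) (k : ℕ) :
    μ (firstEntry E k x) * expHit ν 0 ≤ ∫⁻ ω in firstEntry E k x, hitTime (-x) ω ∂μ := by
  rw [expHit, ← h.setLIntegral_comp_shift hx (dependsOn_mem_firstEntry E k x) (fun ω hω => hω.2.1)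
    (measurable_hitTime 0)]
  refine setLIntegral_mono_ae (measurable_hitTime _).aemeasurable ?_
  filter_upwards [h.ae_transition_ne_zero] with ω hω hωA
  obtain ⟨-, hωk, hbefore⟩ := hωA
  refine hitTime_shift_le_hitTime (fun t => hp _ _ (hω t)) (hωk ▸ hx0) ?_ fun t ht htk => ?_
  · rw [hωk, Set.mem_uIcc]
    omega
  · rcases htk.lt_or_eq with htk | rfl
    · exact fun hωt => hbefore t ht htk (hωt ▸ hE)
    · rw [hωk]
      omega

theorem abs_sub_le_one_of_nnTrans_ne_zero {a b : ℤ} {π : ℤ → ℝ≥0∞} {i j : ℤ}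
    (h : nnTrans a b π i j ≠ 0) : |j - i| ≤ 1 := by
  unfold nnTrans at h
  rw [abs_le]
  split_ifs at h <;> first | omega | exact absurd rfl h

theorem statement9 (n : ℕ) (hn : 0 < n) (π : ℤ → ℝ≥0∞)
    (μ₀ μₙ νₙ : MeasureTheory.Measure (ℕ → ℤ))
    (h₀ : IsMarkovChain (nnTrans (-(n : ℤ)) (n : ℤ) π) 0 μ₀)
    (hₙ : IsMarkovChain (nnTrans (-(n : ℤ)) (n : ℤ) π) (n : ℤ) μₙ)
    (hnn : IsMarkovChain (nnTrans (-(n : ℤ)) (n : ℤ) π) (-(n : ℤ)) νₙ) :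
    min (expHit μₙ 0) (expHit νₙ 0) ≤
      ∫⁻ ω, max (hitTime (n : ℤ) ω) (hitTime (-(n : ℤ)) ω) ∂μ₀ := by
  have := h₀.1
  set m := min (expHit μₙ 0) (expHit νₙ 0)
  set M := fun ω => max (hitTime (n : ℤ) ω) (hitTime (-(n : ℤ)) ω)
  set E : Set ℤ := {(n : ℤ), -(n : ℤ)}
  have hpiece : ∀ q : ℕ × E,
      m * μ₀ (firstEntry E q.1 q.2) ≤ ∫⁻ ω in firstEntry E q.1 q.2, M ω ∂μ₀ := by
    rintro ⟨k, x, hx⟩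
    obtain ⟨ν, hν, hmν, hMx⟩ : ∃ ν, IsMarkovChain (nnTrans (-(n : ℤ)) (n : ℤ) π) x ν ∧
        m ≤ expHit ν 0 ∧ ∀ ω, hitTime (-x) ω ≤ M ω := by
      rcases hx with rfl | rfl
      · exact ⟨μₙ, hₙ, min_le_left _ _, fun ω => le_max_right _ _⟩
      · exact ⟨νₙ, hnn, min_le_right _ _, fun ω => (neg_neg (n : ℤ)).symm ▸ le_max_left _ _⟩
    have hx0 : x ≠ 0 := by rcases hx with rfl | rfl <;> omega
    have hxE : -x ∈ E := by rcases hx with rfl | rfl <;> simp [E]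
    calc m * μ₀ (firstEntry E k x) ≤ μ₀ (firstEntry E k x) * expHit ν 0 := by
          rw [mul_comm]
          gcongr
      _ ≤ ∫⁻ ω in firstEntry E k x, hitTime (-x) ω ∂μ₀ :=
          measure_firstEntry_mul_expHit_le h₀ hν (fun _ _ => abs_sub_le_one_of_nnTrans_ne_zero)
            hx0 hxE k
      _ ≤ ∫⁻ ω in firstEntry E k x, M ω ∂μ₀ := lintegral_mono hMx
  refine le_lintegral_of_mul_measure_le_setLIntegral
    (fun q : ℕ × E => .of_dependsOn_Iic (dependsOn_mem_firstEntry E q.1 q.2))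
    (pairwise_disjoint_firstEntry E) hpiece fun ω hω => ?_
  exact max_eq_top.2 <| Or.inl <| hitTime_eq_top fun t ht hωt =>
    hω <| Set.mem_iUnion.2 <| exists_mem_firstEntry ht (show ω t ∈ E from Or.inl hωt)
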